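/- arXiv:2302.14276 — 2 statements merged into one kernel-verified Lean document; each statement's English description precedes it below -/
import Mathlib

section
/- For finite random variables M, Y with joint pmf p and marginals p_M, p_Y, and for every function f : M × Y → ℝ, E_{p(m,y)}[log σ(f(m,y))] + E_{p_M(m) p_Y(y')}[log(1 − σ(f(m,y')))] ≤ −log 4 + I(M;Y), where σ is the logistic sigmoid. -/
open Real Finset

private lemma aux_log (a c t : ℝ) (ha : 0 < a) (hc : 0 < c) (ht : 0 < t) :
    a * Real.log t ≤ a * Real.log (a / c) + (t * c - a) := by
  have h := Real.log_le_sub_one_of_pos (show (0:ℝ) < t * c / a by positivity)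
  have hL : Real.log (t * c / a) = Real.log t - Real.log (a / c) := by
    rw [Real.log_div (by positivity) ha.ne', Real.log_mul ht.ne' hc.ne',
      Real.log_div ha.ne' hc.ne']
    ring
  rw [hL] at h
  have h2 : a * (Real.log t - Real.log (a / c)) ≤ a * (t * c / a - 1) :=
    mul_le_mul_of_nonneg_left h ha.le
  have h3 : a * (t * c / a - 1) = t * c - a := by field_simp
  nlinarith [h2]

private lemma ptwise1 (a b t : ℝ) (ha : 0 ≤ a) (hb : 0 ≤ b) (ht0 : 0 < t) (ht1 : t < 1) :
    a * Real.log t + b * Real.log (1 - t) ≤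
      (if a = 0 then 0 else a * Real.log (a / (a + b))) +
      (if b = 0 then 0 else b * Real.log (b / (a + b))) := by
  rcases eq_or_lt_of_le ha with ha0 | ha0
  · rcases eq_or_lt_of_le hb with hb0 | hb0
    · simp [← ha0, ← hb0]
    · rw [if_pos ha0.symm, if_neg hb0.ne', ← ha0]
      have : b / (0 + b) = 1 := by field_simp; ring
      rw [this, Real.log_one]
      have hlt : Real.log (1 - t) ≤ 0 := Real.log_nonpos (by linarith) (by linarith)
      nlinarith
  · rcases eq_or_lt_of_le hb with hb0 | hb0
    · rw [if_neg ha0.ne', if_pos hb0.symm, ← hb0]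
      have : a / (a + 0) = 1 := by field_simp; ring
      rw [this, Real.log_one]
      have hlt : Real.log t ≤ 0 := Real.log_nonpos ht0.le (by linarith)
      nlinarith
    · rw [if_neg ha0.ne', if_neg hb0.ne']
      have hc : 0 < a + b := by linarith
      have h1 := aux_log a (a + b) t ha0 hc ht0
      have h2 := aux_log b (a + b) (1 - t) hb0 hc (by linarith)
      linarith

private lemma ptwise2 (a b : ℝ) (ha : 0 ≤ a) (hbn : 0 ≤ b) (hab : b = 0 → a = 0) :
    (if a = 0 then 0 else a * Real.log (a / (a + b))) +
      (if b = 0 then 0 else b * Real.log (b / (a + b))) + (a + b) * Real.log 2 ≤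
    (if a = 0 then 0 else a * Real.log (a / b)) + (2 * b - (a + b)) := by
  rcases eq_or_ne b 0 with hb0 | hb0
  · simp [hab hb0, hb0]
  · have hb : 0 < b := lt_of_le_of_ne hbn (Ne.symm hb0)
    rcases eq_or_lt_of_le ha with ha0 | ha0
    · rw [if_pos ha0.symm, if_pos ha0.symm, if_neg hb0, ← ha0]
      have : b / (0 + b) = 1 := by field_simp; ring
      rw [this, Real.log_one]
      have h2 : Real.log 2 ≤ 1 := by
        have := Real.log_le_sub_one_of_pos (show (0:ℝ) < 2 by norm_num)
        linarith
      nlinarith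
    · rw [if_neg ha0.ne', if_neg ha0.ne', if_neg hb0]
      have hc : 0 < a + b := by linarith
      have hkey := Real.log_le_sub_one_of_pos (show (0:ℝ) < 2 * b / (a + b) by positivity)
      have h2 : (a + b) * Real.log (2 * b / (a + b)) ≤ 2 * b - (a + b) := by
        have := mul_le_mul_of_nonneg_left hkey hc.le
        have he : (a + b) * (2 * b / (a + b) - 1) = 2 * b - (a + b) := by field_simp
        linarith [he ▸ this]
      have hL : Real.log (2 * b / (a + b)) = Real.log 2 + Real.log b - Real.log (a + b) := by
        rw [Real.log_div (by positivity) hc.ne', Real.log_mul (by norm_num) hb.ne']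
      rw [hL] at h2
      have e1 : Real.log (a / (a + b)) = Real.log a - Real.log (a + b) :=
        Real.log_div ha0.ne' hc.ne'
      have e2 : Real.log (b / (a + b)) = Real.log b - Real.log (a + b) :=
        Real.log_div hb.ne' hc.ne'
      have e3 : Real.log (a / b) = Real.log a - Real.log b :=
        Real.log_div ha0.ne' hb.ne'
      rw [e1, e2, e3]
      nlinarith [h2]

/-- NCE-binary / InfoMAX lower bound: for the logistic sigmoid
`σ x = 1 / (1 + exp (−x))` and any `f : M × Y → ℝ`,
`E_{p}[log σ(f)] + E_{p_M ⊗ p_Y}[log (1 − σ(f))] ≤ −log 4 + I(M;Y)`. -/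
theorem stmt_11 {M Y : Type*} [Fintype M] [Fintype Y] (p : M × Y → ℝ)
    (hp0 : ∀ x, 0 ≤ p x) (hp1 : ∑ x, p x = 1)
    (pM : M → ℝ) (pY : Y → ℝ)
    (hpM : ∀ m, pM m = ∑ y, p (m, y)) (hpY : ∀ y, pY y = ∑ m, p (m, y))
    (σ : ℝ → ℝ) (hσ : ∀ x, σ x = 1 / (1 + Real.exp (-x)))
    (f : M × Y → ℝ) :
    (∑ m, ∑ y, p (m, y) * Real.log (σ (f (m, y)))) +
        (∑ m, ∑ y, pM m * pY y * Real.log (1 - σ (f (m, y)))) ≤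
      -Real.log 4 +
        ∑ m, ∑ y, (if p (m, y) = 0 then 0 else
          p (m, y) * Real.log (p (m, y) / (pM m * pY y))) := by
  have hσ0 : ∀ x, 0 < σ x := fun x => by
    rw [hσ]; positivity
  have hσ1 : ∀ x, σ x < 1 := fun x => by
    rw [hσ]
    have h := Real.exp_pos (-x)
    rw [div_lt_one (by linarith)]
    linarith
  -- basic sum facts
  have hA : ∑ m, ∑ y, p (m, y) = 1 := by
    rw [← hp1, ← Fintype.sum_prod_type]
  have hpMsum : ∑ m, pM m = 1 := by
    simp_rw [hpM]; exact hA
  have hpYsum : ∑ y, pY y = 1 := by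
    simp_rw [hpY]
    rw [Finset.sum_comm]; exact hA
  have hB : ∑ m, ∑ y, pM m * pY y = 1 := by
    simp_rw [← Finset.mul_sum, hpYsum, mul_one]
    exact hpMsum
  -- nonnegativity of marginals product, and vanishing implication
  have hbnn : ∀ m y, 0 ≤ pM m * pY y := fun m y => by
    have h1 : 0 ≤ pM m := by rw [hpM]; exact Finset.sum_nonneg fun _ _ => hp0 _
    have h2 : 0 ≤ pY y := by rw [hpY]; exact Finset.sum_nonneg fun _ _ => hp0 _
    positivity
  have hvan : ∀ m y, pM m * pY y = 0 → p (m, y) = 0 := by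
    intro m y h
    rcases mul_eq_zero.mp h with h | h
    · rw [hpM] at h
      exact (Finset.sum_eq_zero_iff_of_nonneg (fun _ _ => hp0 _)).mp h y (Finset.mem_univ _)
    · rw [hpY] at h
      exact (Finset.sum_eq_zero_iff_of_nonneg (fun _ _ => hp0 _)).mp h m (Finset.mem_univ _)
  -- Step 1: bound by optimal classifier value
  have step1 : (∑ m, ∑ y, p (m, y) * Real.log (σ (f (m, y)))) +
      (∑ m, ∑ y, pM m * pY y * Real.log (1 - σ (f (m, y)))) ≤
      ∑ m, ∑ y, ((if p (m, y) = 0 then 0 else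
          p (m, y) * Real.log (p (m, y) / (p (m, y) + pM m * pY y))) +
        (if pM m * pY y = 0 then 0 else
          pM m * pY y * Real.log (pM m * pY y / (p (m, y) + pM m * pY y)))) := by
    rw [← Finset.sum_add_distrib]
    refine Finset.sum_le_sum fun m _ => ?_
    rw [← Finset.sum_add_distrib]
    refine Finset.sum_le_sum fun y _ => ?_
    exact ptwise1 _ _ _ (hp0 _) (hbnn m y) (hσ0 _) (hσ1 _)
  -- Step 2: compare to KL term
  have step2 : ∑ m, ∑ y, ((if p (m, y) = 0 then 0 else
          p (m, y) * Real.log (p (m, y) / (p (m, y) + pM m * pY y))) +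
        (if pM m * pY y = 0 then 0 else
          pM m * pY y * Real.log (pM m * pY y / (p (m, y) + pM m * pY y)))) ≤
      -Real.log 4 +
        ∑ m, ∑ y, (if p (m, y) = 0 then 0 else
          p (m, y) * Real.log (p (m, y) / (pM m * pY y))) := by
    have hterm : ∀ m y, ((if p (m, y) = 0 then 0 else
          p (m, y) * Real.log (p (m, y) / (p (m, y) + pM m * pY y))) +
        (if pM m * pY y = 0 then 0 else
          pM m * pY y * Real.log (pM m * pY y / (p (m, y) + pM m * pY y)))) ≤
        (if p (m, y) = 0 then 0 else
          p (m, y) * Real.log (p (m, y) / (pM m * pY y))) +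
        (2 * (pM m * pY y) - (p (m, y) + pM m * pY y)) -
        (p (m, y) + pM m * pY y) * Real.log 2 := by
      intro m y
      have := ptwise2 (p (m, y)) (pM m * pY y) (hp0 _) (hbnn m y) (hvan m y)
      linarith
    calc ∑ m, ∑ y, ((if p (m, y) = 0 then 0 else
          p (m, y) * Real.log (p (m, y) / (p (m, y) + pM m * pY y))) +
        (if pM m * pY y = 0 then 0 else
          pM m * pY y * Real.log (pM m * pY y / (p (m, y) + pM m * pY y))))
        ≤ ∑ m, ∑ y, ((if p (m, y) = 0 then 0 else
          p (m, y) * Real.log (p (m, y) / (pM m * pY y))) +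
        (2 * (pM m * pY y) - (p (m, y) + pM m * pY y)) -
        (p (m, y) + pM m * pY y) * Real.log 2) := by
          refine Finset.sum_le_sum fun m _ => Finset.sum_le_sum fun y _ => hterm m y
      _ = -Real.log 4 +
        ∑ m, ∑ y, (if p (m, y) = 0 then 0 else
          p (m, y) * Real.log (p (m, y) / (pM m * pY y))) := by
          simp_rw [Finset.sum_sub_distrib, Finset.sum_add_distrib, ← Finset.sum_mul]
          have hs1 : (∑ m, ∑ y, (2 * (pM m * pY y) - (p (m, y) + pM m * pY y))) = 0 := by
            have e : ∀ m, ∑ y, (2 * (pM m * pY y) - (p (m, y) + pM m * pY y))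
                = 2 * (∑ y, pM m * pY y) - ((∑ y, p (m, y)) + ∑ y, pM m * pY y) := fun m => by
              rw [Finset.mul_sum, ← Finset.sum_add_distrib, ← Finset.sum_sub_distrib]
            simp_rw [e]
            have e2 : ∑ m, (2 * (∑ y, pM m * pY y) -
                ((∑ y, p (m, y)) + ∑ y, pM m * pY y))
                = 2 * (∑ m, ∑ y, pM m * pY y) -
                  ((∑ m, ∑ y, p (m, y)) + ∑ m, ∑ y, pM m * pY y) := by
              rw [Finset.mul_sum, ← Finset.sum_add_distrib, ← Finset.sum_sub_distrib]
            rw [e2, hA, hB]; norm_num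
          have hs2 : (∑ m, ∑ y, (p (m, y) + pM m * pY y)) = 2 := by
            simp_rw [Finset.sum_add_distrib]
            rw [hA, hB]; norm_num
          rw [hs1, hs2]
          have h4 : Real.log 4 = 2 * Real.log 2 := by
            rw [show (4:ℝ) = 2 ^ 2 by norm_num, Real.log_pow]
            push_cast; ring
          rw [h4]; ring
  linarith [step1, step2]
end

section
/- The optimal binary discriminator: the function maximizing E_{p(m,y)}[log σ(f(m,y))] + E_{p_M⊗p_Y}[log(1 − σ(f(m,y)))] over all f : M × Y → ℝ satisfies σ(f*(m,y)) = p(m,y)/(p(m,y) + p_M(m)p_Y(y)) wherever p(m,y) + p_M(m)p_Y(y) > 0; equivalently exp(f*(m,y)) = p(y|m)/p_Y(y), the pointwise mutual information ratio. -/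
/-! Writing `a = p(m, y)` and `b = p_M(m) p_Y(y)`, the objective is a sum of independent terms
`a log s + b log (1 - s)` with `s = σ(f(m, y)) ∈ (0, 1)`. Each term is maximized at
`t = a / (a + b)`: by `log x ≤ x - 1`, its value at `s` exceeds its value at `t` by at most
`a (s / t - 1) + b ((1 - s) / (1 - t) - 1) = 0` (Gibbs' inequality for two-point distributions).
The mutual-information form is `exp x = σ(x) / (1 - σ(x))` evaluated at `σ(f⋆) = a / (a + b)`. -/

open Finset Real

lemma Real.exp_eq_sigmoid_div_one_sub_sigmoid (x : ℝ) :
    exp x = sigmoid x / (1 - sigmoid x) := by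
  rw [← sigmoid_neg, ← sigmoid_mul_rexp_neg, div_mul_cancel_left₀ (sigmoid_pos x).ne', exp_neg,
    inv_inv]

lemma mul_log_add_mul_log_one_sub_le {a b s t : ℝ} (ha : 0 ≤ a) (hb : 0 ≤ b)
    (hs₀ : 0 < s) (hs₁ : s < 1) (ht₀ : 0 < t) (ht₁ : t < 1) (ht : 0 < a + b → t = a / (a + b)) :
    a * log s + b * log (1 - s) ≤ a * log t + b * log (1 - t) := by
  rcases (add_nonneg ha hb).eq_or_lt with hab | hab
  · obtain ⟨rfl, rfl⟩ := (add_eq_zero_iff_of_nonneg ha hb).mp hab.symm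
    simp
  have hb₁ : 0 < 1 - t := sub_pos.mpr ht₁
  have hat : a = t * (a + b) := by rw [ht hab, div_mul_cancel₀ _ hab.ne']
  have hbt : b = (1 - t) * (a + b) := by linarith
  have hlog₁ : log s - log t ≤ s / t - 1 := by
    rw [← log_div hs₀.ne' ht₀.ne']
    exact log_le_sub_one_of_pos (div_pos hs₀ ht₀)
  have hlog₂ : log (1 - s) - log (1 - t) ≤ (1 - s) / (1 - t) - 1 := by
    rw [← log_div (sub_pos.mpr hs₁).ne' hb₁.ne']
    exact log_le_sub_one_of_pos (div_pos (sub_pos.mpr hs₁) hb₁)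
  have hsum : a * (s / t - 1) + b * ((1 - s) / (1 - t) - 1) = 0 := by
    calc a * (s / t - 1) + b * ((1 - s) / (1 - t) - 1)
        = t * (a + b) * (s / t - 1) + (1 - t) * (a + b) * ((1 - s) / (1 - t) - 1) := by
          rw [← hat, ← hbt]
      _ = 0 := by field_simp; ring
  nlinarith [mul_le_mul_of_nonneg_left hlog₁ ha, mul_le_mul_of_nonneg_left hlog₂ hb]

theorem stmt_12_general {M Y : Type*} [Fintype M] [Fintype Y] (p : M × Y → ℝ)
    (hp0 : ∀ x, 0 ≤ p x)
    (pM : M → ℝ) (pY : Y → ℝ)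
    (hpM : ∀ m, pM m = ∑ y, p (m, y)) (hpY : ∀ y, pY y = ∑ m, p (m, y))
    (σ : ℝ → ℝ) (hσ : ∀ x, σ x = 1 / (1 + Real.exp (-x)))
    (fstar : M × Y → ℝ)
    (hfstar : ∀ m y, 0 < p (m, y) + pM m * pY y →
      σ (fstar (m, y)) = p (m, y) / (p (m, y) + pM m * pY y)) :
    (∀ f : M × Y → ℝ,
      (∑ m, ∑ y, p (m, y) * Real.log (σ (f (m, y)))) +
          (∑ m, ∑ y, pM m * pY y * Real.log (1 - σ (f (m, y)))) ≤
        (∑ m, ∑ y, p (m, y) * Real.log (σ (fstar (m, y)))) +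
          (∑ m, ∑ y, pM m * pY y * Real.log (1 - σ (fstar (m, y))))) ∧
    (∀ m y, 0 < pM m * pY y →
      Real.exp (fstar (m, y)) = p (m, y) / (pM m * pY y)) := by
  obtain rfl : σ = sigmoid := funext fun x => by rw [hσ, one_div]; rfl
  have hpM₀ (m : M) : 0 ≤ pM m := hpM m ▸ sum_nonneg fun y _ => hp0 (m, y)
  have hpY₀ (y : Y) : 0 ≤ pY y := hpY y ▸ sum_nonneg fun m _ => hp0 (m, y)
  refine ⟨fun f => ?_, fun m y hb => ?_⟩
  · simp only [← sum_add_distrib]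
    exact sum_le_sum fun m _ => sum_le_sum fun y _ =>
      mul_log_add_mul_log_one_sub_le (hp0 _) (mul_nonneg (hpM₀ m) (hpY₀ y))
        (sigmoid_pos _) (sigmoid_lt_one _) (sigmoid_pos _) (sigmoid_lt_one _) (hfstar m y)
  · have hab : 0 < p (m, y) + pM m * pY y := add_pos_of_nonneg_of_pos (hp0 _) hb
    rw [exp_eq_sigmoid_div_one_sub_sigmoid, hfstar m y hab, one_sub_div hab.ne',
      add_sub_cancel_left, div_div_div_cancel_right₀ hab.ne']

/-- The optimal binary discriminator: if `σ (f⋆ (m, y)) = p (m,y) / (p (m,y) + p_M m * p_Y y)`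
wherever `p (m,y) + p_M m * p_Y y > 0`, then `f⋆` maximizes the NCE-binary objective
`E_{p}[log σ(f)] + E_{p_M ⊗ p_Y}[log (1 − σ(f))]`, and equivalently
`exp (f⋆ (m,y)) = p (m,y) / (p_M m * p_Y y)`, the pointwise mutual information ratio. -/
theorem stmt_12 {M Y : Type*} [Fintype M] [Fintype Y] (p : M × Y → ℝ)
    (hp0 : ∀ x, 0 ≤ p x) (hp1 : ∑ x, p x = 1)
    (pM : M → ℝ) (pY : Y → ℝ)
    (hpM : ∀ m, pM m = ∑ y, p (m, y)) (hpY : ∀ y, pY y = ∑ m, p (m, y))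
    (σ : ℝ → ℝ) (hσ : ∀ x, σ x = 1 / (1 + Real.exp (-x)))
    (fstar : M × Y → ℝ)
    (hfstar : ∀ m y, 0 < p (m, y) + pM m * pY y →
      σ (fstar (m, y)) = p (m, y) / (p (m, y) + pM m * pY y)) :
    (∀ f : M × Y → ℝ,
      (∑ m, ∑ y, p (m, y) * Real.log (σ (f (m, y)))) +
          (∑ m, ∑ y, pM m * pY y * Real.log (1 - σ (f (m, y)))) ≤
        (∑ m, ∑ y, p (m, y) * Real.log (σ (fstar (m, y)))) +
          (∑ m, ∑ y, pM m * pY y * Real.log (1 - σ (fstar (m, y))))) ∧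
    (∀ m y, 0 < pM m * pY y →
      Real.exp (fstar (m, y)) = p (m, y) / (pM m * pY y)) :=
  stmt_12_general p hp0 pM pY hpM hpY σ hσ fstar hfstar
end
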